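/- Let G = (E, V) be a random tree with i.i.d. offspring whose offspring distribution has finite expectation. Then almost surely there exist M ≥ 1 and a family (G_i)_{i ∈ ℕ} of pairwise vertex-disjoint finite subtrees G_i = (E_i, V_i) of G with V = ⋃_{i ∈ ℕ} V_i and sup_{i ∈ ℕ} max_{x ∈ max(V_i)} off(x) ≤ M, where max(V_i) := {x ∈ V_i : every son of x in G lies outside V_i}. -/

import Mathlib

/- Common setup: the Hilbert space ℓ²(V), the subspace `C_c` of finitely supported
   functions, essential self-adjointness and deficiency indices for `LinearPMap`s. -/

noncomputable section

open scoped ENNReal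

/-- The Hilbert space ℓ²(V) with complex coefficients. -/
abbrev l2 (V : Type*) := lp (fun _ : V => ℂ) 2

/-- The dense subspace `C_c(G)` of finitely supported functions in ℓ²(V). -/
def Cc (V : Type*) : Submodule ℂ (l2 V) where
  carrier := {f | (Function.support (⇑f : V → ℂ)).Finite}
  add_mem' := by
    intro f g hf hg
    exact ((hf.union hg).subset (by rw [lp.coeFn_add]; exact Function.support_add _ _))
  zero_mem' := by
    have h0 : (Function.support (⇑(0 : l2 V) : V → ℂ)) = ∅ := by
      ext x
      simp only [Set.mem_empty_iff_false, iff_false, Function.mem_support, not_not]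
      exact congrFun (lp.coeFn_zero _ _) x
    simp only [Set.mem_setOf_eq, h0, Set.finite_empty]
  smul_mem' := by
    intro c f hf
    refine hf.subset ?_
    intro x hx
    simp only [Function.mem_support, lp.coeFn_smul, Pi.smul_apply, smul_eq_mul] at hx ⊢
    intro h0
    exact hx (by rw [h0, mul_zero])

/-- A densely defined operator is essentially self-adjoint if it is closable
and its closure is self-adjoint. -/
def IsEssentiallySelfAdjoint {H : Type*} [NormedAddCommGroup H] [InnerProductSpace ℂ H]
    [CompleteSpace H] (T : H →ₗ.[ℂ] H) : Prop :=
  T.IsClosable ∧ IsSelfAdjoint T.closure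

/-- The (random) vertex set of the random tree with i.i.d. offspring `X`:
words `(w₁, …, wₙ)` over `ℕ \ {0}` such that `w_{m+1} ≤ X_{(w₁, …, w_m)}`. -/
def randomTreeVertices {Ω : Type*} (X : List ℕ → Ω → ℕ) (ω : Ω) : Set (List ℕ) :=
  {w | ∀ (u : List ℕ) (a : ℕ), u ++ [a] <+: w → 1 ≤ a ∧ a ≤ X u ω}

/-- The (random) tree graph on words: two vertices are adjacent exactly when one is
the other extended by a single letter. -/
def randomTreeGraph {Ω : Type*} (X : List ℕ → Ω → ℕ) (ω : Ω) : SimpleGraph (List ℕ) where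
  Adj v w := (v ∈ randomTreeVertices X ω ∧ w ∈ randomTreeVertices X ω) ∧
    ((∃ a : ℕ, w = v ++ [a]) ∨ (∃ a : ℕ, v = w ++ [a]))
  symm := by
    constructor
    intro v w h
    exact ⟨⟨h.1.2, h.1.1⟩, h.2.symm⟩
  loopless := by
    constructor
    intro v h
    rcases h.2 with ⟨a, ha⟩ | ⟨a, ha⟩ <;>
      simpa using congrArg List.length ha

/-- The number of sons of a vertex `x` in the random tree. -/
noncomputable def randomTreeOff {Ω : Type*} (X : List ℕ → Ω → ℕ) (ω : Ω) (x : List ℕ) : ℕ :=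
  Nat.card {a : ℕ | x ++ [a] ∈ randomTreeVertices X ω}

/-! Choose `M ≥ 1` with `q := E[X; X > M] < 1` and call a vertex heavy if it has more than `M`
sons. The heavy cluster of `v` consists of the descendants of `v` reached through heavy vertices
only. Along a fixed word of length `n` below `v` the events "the next letter is a son of a heavy
vertex" are independent, each of total mass `q` over the choice of the letter, so the expected
size of a heavy cluster is at most `∑ₙ qⁿ < ∞` and almost surely all heavy clusters are finite.
The heavy clusters rooted at `[]` and at the sons of light vertices partition the tree into
finite subtrees, and a vertex of such a cluster with no son in it is light. -/

open MeasureTheory ProbabilityTheory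

lemma ENNReal.tsum_fin_prod_eq_pow {α : Type*} (p : α → ℝ≥0∞) (n : ℕ) :
    ∑' f : Fin n → α, ∏ i, p (f i) = (∑' a, p a) ^ n := by
  induction n with
  | zero => simp
  | succ n ih =>
    rw [← (Fin.consEquiv fun _ => α).tsum_eq, ENNReal.tsum_prod', pow_succ', ← ih,
      ← ENNReal.tsum_mul_right]
    refine tsum_congr fun a => ?_
    rw [← ENNReal.tsum_mul_left]
    refine tsum_congr fun f => ?_
    simp [Fin.consEquiv, Fin.prod_univ_succ]

lemma exists_tail_lintegral_lt_one {Ω : Type*} [MeasurableSpace Ω] {μ : Measure Ω} {Y : Ω → ℕ}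
    (hY : Measurable Y) (hint : ∫⁻ ω, (Y ω : ℝ≥0∞) ∂μ < ⊤) :
    ∃ M : ℕ, 1 ≤ M ∧ ∫⁻ ω, (if M < Y ω then (Y ω : ℝ≥0∞) else 0) ∂μ < 1 := by
  have htail : Filter.Tendsto (fun M => ∫⁻ ω, (if M < Y ω then (Y ω : ℝ≥0∞) else 0) ∂μ)
      Filter.atTop (nhds (∫⁻ _, 0 ∂μ)) := by
    refine tendsto_lintegral_of_dominated_convergence (fun ω => (Y ω : ℝ≥0∞))
      (fun M => (Measurable.of_discrete
        (f := fun n : ℕ => if M < n then (n : ℝ≥0∞) else 0)).comp hY)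
      (fun M => Filter.Eventually.of_forall fun ω => ?_) hint.ne
      (Filter.Eventually.of_forall fun ω => tendsto_const_nhds.congr' ?_)
    · dsimp only
      split_ifs <;> simp
    · filter_upwards [Filter.eventually_ge_atTop (Y ω)] with M hM
      simp [hM.not_gt]
  rw [lintegral_zero] at htail
  exact ((htail.eventually (gt_mem_nhds zero_lt_one)).and (Filter.eventually_ge_atTop 1)).exists.imp
    fun M hM => ⟨hM.2, hM.1⟩

section Deterministic

variable {Ω : Type*} {X : List ℕ → Ω → ℕ} {ω : Ω}

lemma mem_randomTreeVertices_of_prefix {u w : List ℕ} (hw : w ∈ randomTreeVertices X ω)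
    (h : u <+: w) : u ∈ randomTreeVertices X ω :=
  fun u' a ha => hw u' a (ha.trans h)

lemma append_singleton_mem_randomTreeVertices_iff {x : List ℕ} {a : ℕ}
    (hx : x ∈ randomTreeVertices X ω) :
    x ++ [a] ∈ randomTreeVertices X ω ↔ 1 ≤ a ∧ a ≤ X x ω := by
  refine ⟨fun h => h x a List.prefix_rfl, fun ha u b hub => ?_⟩
  rcases List.prefix_concat_iff.mp hub with heq | hpre
  · obtain ⟨rfl, hb⟩ := List.append_inj' heq rfl
    obtain rfl : b = a := by simpa using hb
    exact ha
  · exact hx u b hpre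

lemma randomTreeOff_eq {x : List ℕ} (hx : x ∈ randomTreeVertices X ω) :
    randomTreeOff X ω x = X x ω := by
  have hsons : {a : ℕ | x ++ [a] ∈ randomTreeVertices X ω} = Set.Icc 1 (X x ω) := by
    ext a
    exact append_singleton_mem_randomTreeVertices_iff hx
  rw [randomTreeOff, hsons, ← Finset.coe_Icc, Nat.card_coe_set_eq, Set.ncard_coe_finset,
    Nat.card_Icc]
  omega

def heavyCluster (M : ℕ) (X : List ℕ → Ω → ℕ) (ω : Ω) (v : List ℕ) : Set (List ℕ) :=
  {w | v <+: w ∧ w ∈ randomTreeVertices X ω ∧ ∀ u, v <+: u → u <+: w → u ≠ w → M < X u ω}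

variable {M : ℕ}

lemma self_mem_heavyCluster {v : List ℕ} (hv : v ∈ randomTreeVertices X ω) :
    v ∈ heavyCluster M X ω v :=
  ⟨List.prefix_rfl, hv, fun _ hvu huv hne => absurd (huv.eq_of_length_le hvu.length_le) hne⟩

lemma mem_heavyCluster_of_prefix {v u w : List ℕ} (hw : w ∈ heavyCluster M X ω v)
    (hvu : v <+: u) (huw : u <+: w) : u ∈ heavyCluster M X ω v := by
  refine ⟨hvu, mem_randomTreeVertices_of_prefix hw.2.1 huw, fun z hvz hzu hzne => ?_⟩
  refine hw.2.2 z hvz (hzu.trans huw) fun hzw => hzne ?_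
  subst hzw
  exact (huw.eq_of_length_le hzu.length_le).symm

lemma append_singleton_mem_heavyCluster {v w : List ℕ} {a : ℕ} (hw : w ∈ heavyCluster M X ω v)
    (hwa : w ++ [a] ∈ randomTreeVertices X ω) (hheavy : M < X w ω) :
    w ++ [a] ∈ heavyCluster M X ω v := by
  refine ⟨hw.1.trans (List.prefix_append _ _), hwa, fun u hvu hu hne => ?_⟩
  rcases List.prefix_concat_iff.mp hu with heq | hpre
  · exact absurd heq hne
  · rcases eq_or_ne u w with rfl | huw
    · exact hheavy
    · exact hw.2.2 u hvu hpre huw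

lemma heavyCluster_preconnected {v : List ℕ} (hv : v ∈ randomTreeVertices X ω) :
    ((randomTreeGraph X ω).induce (heavyCluster M X ω v)).Preconnected := by
  have hroot := self_mem_heavyCluster (M := M) hv
  suffices h : ∀ t (ht : v ++ t ∈ heavyCluster M X ω v),
      ((randomTreeGraph X ω).induce (heavyCluster M X ω v)).Reachable ⟨v, hroot⟩ ⟨v ++ t, ht⟩ by
    rintro ⟨x, hx⟩ ⟨y, hy⟩
    obtain ⟨tx, rfl⟩ := hx.1
    obtain ⟨ty, rfl⟩ := hy.1
    exact (h tx hx).symm.trans (h ty hy)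
  intro t
  induction t using List.reverseRecOn with
  | nil => intro ht; simp only [List.append_nil]; rfl
  | append_singleton t b ih =>
    intro ht
    have ht' := mem_heavyCluster_of_prefix ht (List.prefix_append v t)
      (by simp [← List.append_assoc])
    have hadj : ((randomTreeGraph X ω).induce (heavyCluster M X ω v)).Adj
        ⟨v ++ t, ht'⟩ ⟨v ++ (t ++ [b]), ht⟩ := ⟨⟨ht'.2.1, ht.2.1⟩, Or.inl ⟨b, by simp⟩⟩
    exact (ih ht').trans hadj.reachable

lemma randomTreeOff_le_of_forall_son_not_mem_heavyCluster {v x : List ℕ}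
    (hx : x ∈ heavyCluster M X ω v)
    (hsons : ∀ a, x ++ [a] ∈ randomTreeVertices X ω → x ++ [a] ∉ heavyCluster M X ω v) :
    randomTreeOff X ω x ≤ M := by
  rw [randomTreeOff_eq hx.2.1]
  by_contra! hheavy
  have hson : x ++ [1] ∈ randomTreeVertices X ω :=
    (append_singleton_mem_randomTreeVertices_iff hx.2.1).2 ⟨le_rfl, by omega⟩
  exact hsons 1 hson (append_singleton_mem_heavyCluster hx hson hheavy)

def IsClusterRoot (M : ℕ) (X : List ℕ → Ω → ℕ) (ω : Ω) (r : List ℕ) : Prop :=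
  r ∈ randomTreeVertices X ω ∧ (r = [] ∨ ∃ u a, r = u ++ [a] ∧ X u ω ≤ M)

lemma exists_isClusterRoot_mem_heavyCluster {w : List ℕ} (hw : w ∈ randomTreeVertices X ω) :
    ∃ r, IsClusterRoot M X ω r ∧ w ∈ heavyCluster M X ω r := by
  induction w using List.reverseRecOn with
  | nil => exact ⟨[], ⟨hw, Or.inl rfl⟩, self_mem_heavyCluster hw⟩
  | append_singleton w a ih =>
    have hw' := mem_randomTreeVertices_of_prefix hw (List.prefix_append w [a])
    rcases le_or_gt (X w ω) M with hlight | hheavy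
    · exact ⟨w ++ [a], ⟨hw, Or.inr ⟨w, a, rfl, hlight⟩⟩, self_mem_heavyCluster hw⟩
    · obtain ⟨r, hr, hwr⟩ := ih hw'
      exact ⟨r, hr, append_singleton_mem_heavyCluster hwr hw hheavy⟩

lemma heavyCluster_disjoint_of_length_lt {r r' : List ℕ} (hr' : IsClusterRoot M X ω r')
    (hlt : r.length < r'.length) : Disjoint (heavyCluster M X ω r) (heavyCluster M X ω r') := by
  rw [Set.disjoint_left]
  intro w hw hw'
  rcases hr'.2 with rfl | ⟨u, a, rfl, hlight⟩
  · simp at hlt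
  · have huw : u <+: w := (List.prefix_append u [a]).trans hw'.1
    have hru : r <+: u := List.prefix_of_prefix_length_le hw.1 huw (by simp at hlt; omega)
    have hne : u ≠ w := by
      rintro rfl
      simpa using hw'.1.length_le
    exact (hw.2.2 u hru huw hne).not_ge hlight

lemma heavyCluster_disjoint {r r' : List ℕ} (hr : IsClusterRoot M X ω r)
    (hr' : IsClusterRoot M X ω r') (hne : r ≠ r') :
    Disjoint (heavyCluster M X ω r) (heavyCluster M X ω r') := by
  rcases lt_trichotomy r.length r'.length with hlt | heq | hgt
  · exact heavyCluster_disjoint_of_length_lt hr' hlt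
  · rw [Set.disjoint_left]
    exact fun w hw hw' =>
      hne ((List.prefix_of_prefix_length_le hw.1 hw'.1 heq.le).eq_of_length heq)
  · exact (heavyCluster_disjoint_of_length_lt hr hgt).symm

theorem exists_finite_subtree_partition {M : ℕ} (hfin : ∀ v, (heavyCluster M X ω v).Finite) :
    ∃ Vi : ℕ → Set (List ℕ),
      (∀ i, Vi i ⊆ randomTreeVertices X ω) ∧
      (∀ i j, i ≠ j → Disjoint (Vi i) (Vi j)) ∧
      (⋃ i, Vi i) = randomTreeVertices X ω ∧
      (∀ i, (Vi i).Finite) ∧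
      (∀ i, ((randomTreeGraph X ω).induce (Vi i)).Preconnected) ∧
      (∀ i, ∀ x ∈ Vi i,
        (∀ a : ℕ, x ++ [a] ∈ randomTreeVertices X ω → x ++ [a] ∉ Vi i) →
        randomTreeOff X ω x ≤ M) := by
  let root (i : ℕ) : List ℕ := Denumerable.ofNat (List ℕ) i
  refine ⟨fun i => {w | IsClusterRoot M X ω (root i) ∧ w ∈ heavyCluster M X ω (root i)},
    fun i w hw => hw.2.2.1, ?_, ?_, fun i => (hfin _).subset fun w hw => hw.2, ?_,
    fun i x hx hsons => randomTreeOff_le_of_forall_son_not_mem_heavyCluster hx.2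
      fun a ha hmem => hsons a ha ⟨hx.1, hmem⟩⟩
  · intro i j hij
    rw [Set.disjoint_left]
    rintro w ⟨hi, hwi⟩ ⟨hj, hwj⟩
    have hne : root i ≠ root j := fun h => hij (by simpa [root] using congrArg Encodable.encode h)
    exact Set.disjoint_left.1 (heavyCluster_disjoint hi hj hne) hwi hwj
  · ext w
    simp only [Set.mem_iUnion]
    refine ⟨fun ⟨i, hw⟩ => hw.2.2.1, fun hw => ?_⟩
    obtain ⟨r, hr, hwr⟩ := exists_isClusterRoot_mem_heavyCluster hw
    exact ⟨Encodable.encode r, by simpa [root] using And.intro hr hwr⟩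
  · intro i
    dsimp only
    by_cases hr : IsClusterRoot M X ω (root i)
    · have hpiece : {w | IsClusterRoot M X ω (root i) ∧ w ∈ heavyCluster M X ω (root i)} =
          heavyCluster M X ω (root i) := Set.ext fun w => and_iff_right hr
      rw [hpiece]
      exact heavyCluster_preconnected hr.1
    · rintro ⟨x, hx⟩
      exact absurd hx.1 hr

def heavyChildIndicator (M a n : ℕ) : ℝ≥0∞ := if 1 ≤ a ∧ a ≤ n ∧ M < n then 1 else 0

lemma tsum_heavyChildIndicator (M n : ℕ) :
    ∑' a, heavyChildIndicator M a n = if M < n then (n : ℝ≥0∞) else 0 := by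
  split_ifs with h
  · rw [tsum_eq_sum (s := Finset.Icc 1 n) fun a ha => by simp_all [heavyChildIndicator]]
    simp [heavyChildIndicator, h, Finset.filter_true_of_mem fun a ha => Finset.mem_Icc.mp ha]
  · simp [heavyChildIndicator, h]

def heavyPathWeight (M : ℕ) (g : List ℕ → ℕ) (v : List ℕ) {n : ℕ} (f : Fin n → ℕ) : ℝ≥0∞ :=
  ∏ i : Fin n, heavyChildIndicator M (f i) (g (v ++ (List.ofFn f).take i))

lemma heavyPathWeight_eq_one {v : List ℕ} {n : ℕ} {f : Fin n → ℕ}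
    (h : v ++ List.ofFn f ∈ heavyCluster M X ω v) :
    heavyPathWeight M (X · ω) v f = 1 := by
  refine Finset.prod_eq_one fun i _ => if_pos ?_
  set u := v ++ (List.ofFn f).take i
  have hpre : u ++ [f i] <+: v ++ List.ofFn f := by
    rw [List.append_assoc]
    refine List.prefix_append_right_inj v |>.2 ?_
    simpa [List.take_add_one] using List.take_prefix (i + 1) (List.ofFn f)
  have hne : u ≠ v ++ List.ofFn f := fun heq => by
    have := congrArg List.length heq
    simp only [u, List.length_append, List.length_take, List.length_ofFn] at this
    omega
  have hletter := h.2.1 u (f i) hpre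
  exact ⟨hletter.1, hletter.2, h.2.2 u (List.prefix_append _ _)
    ((List.prefix_append _ _).trans hpre) hne⟩

end Deterministic

section Probability

variable {Ω : Type*} [MeasurableSpace Ω]

lemma tsum_lintegral_heavyChildIndicator {μ : Measure Ω} {Y : Ω → ℕ} (hY : Measurable Y)
    (M : ℕ) :
    ∑' a, ∫⁻ ω, heavyChildIndicator M a (Y ω) ∂μ =
      ∫⁻ ω, (if M < Y ω then (Y ω : ℝ≥0∞) else 0) ∂μ := by
  rw [← lintegral_tsum (f := fun a ω => heavyChildIndicator M a (Y ω)) fun a =>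
    ((Measurable.of_discrete (f := heavyChildIndicator M a)).comp hY).aemeasurable]
  simp_rw [tsum_heavyChildIndicator]

variable (P : Measure Ω) {X : List ℕ → Ω → ℕ}

lemma lintegral_heavyPathWeight (hmeas : ∀ w, Measurable (X w)) (hindep : iIndepFun X P)
    (hident : ∀ w, IdentDistrib (X w) (X []) P P) (M : ℕ) (v : List ℕ) {n : ℕ} (f : Fin n → ℕ) :
    ∫⁻ ω, heavyPathWeight M (X · ω) v f ∂P =
      ∏ i, ∫⁻ ω, heavyChildIndicator M (f i) (X [] ω) ∂P := by
  set u : Fin n → List ℕ := fun i => v ++ (List.ofFn f).take i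
  have hu : Function.Injective u := fun i j hij => by
    have := congrArg List.length hij
    simp only [u, List.length_append, List.length_take, List.length_ofFn] at this
    omega
  have hind := (hindep.precomp hu).comp (fun i => heavyChildIndicator M (f i))
    fun _ => Measurable.of_discrete
  calc ∫⁻ ω, heavyPathWeight M (X · ω) v f ∂P
      = ∏ i, ∫⁻ ω, heavyChildIndicator M (f i) (X (u i) ω) ∂P :=
        lintegral_prod_eq_prod_lintegral_of_indepFun _ _ hind
          fun i => (Measurable.of_discrete (f := heavyChildIndicator M (f i))).comp (hmeas (u i))
    _ = _ := Finset.prod_congr rfl fun i _ =>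
        ((hident (u i)).comp
          (Measurable.of_discrete (f := heavyChildIndicator M (f i)))).lintegral_eq

lemma measurable_heavyPathWeight (hmeas : ∀ w, Measurable (X w)) (M : ℕ) (v : List ℕ) {n : ℕ}
    (f : Fin n → ℕ) : Measurable fun ω => heavyPathWeight M (X · ω) v f :=
  Finset.measurable_prod _ fun i _ =>
    (Measurable.of_discrete (f := heavyChildIndicator M (f i))).comp (hmeas _)

lemma lintegral_tsum_heavyPathWeight (hmeas : ∀ w, Measurable (X w)) (hindep : iIndepFun X P)
    (hident : ∀ w, IdentDistrib (X w) (X []) P P) (M : ℕ) (v : List ℕ) :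
    ∫⁻ ω, ∑' s : Σ n, (Fin n → ℕ), heavyPathWeight M (X · ω) v s.2 ∂P =
      ∑' n : ℕ, (∫⁻ ω, (if M < X [] ω then (X [] ω : ℝ≥0∞) else 0) ∂P) ^ n := by
  calc ∫⁻ ω, ∑' s : Σ n, (Fin n → ℕ), heavyPathWeight M (X · ω) v s.2 ∂P
      = ∑' s : Σ n, (Fin n → ℕ), ∫⁻ ω, heavyPathWeight M (X · ω) v s.2 ∂P :=
        lintegral_tsum fun s => (measurable_heavyPathWeight hmeas M v s.2).aemeasurable
    _ = ∑' (n : ℕ) (f : Fin n → ℕ), ∫⁻ ω, heavyPathWeight M (X · ω) v f ∂P :=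
        ENNReal.tsum_sigma' _
    _ = ∑' n : ℕ, (∑' a, ∫⁻ ω, heavyChildIndicator M a (X [] ω) ∂P) ^ n :=
        tsum_congr fun n => by
          rw [← ENNReal.tsum_fin_prod_eq_pow]
          exact tsum_congr fun f => lintegral_heavyPathWeight P hmeas hindep hident M v f
    _ = _ := by rw [tsum_lintegral_heavyChildIndicator (hmeas [])]

lemma ae_finite_heavyCluster (hmeas : ∀ w, Measurable (X w)) (hindep : iIndepFun X P)
    (hident : ∀ w, IdentDistrib (X w) (X []) P P) {M : ℕ}
    (hq : ∫⁻ ω, (if M < X [] ω then (X [] ω : ℝ≥0∞) else 0) ∂P < 1) :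
    ∀ᵐ ω ∂P, ∀ v, (heavyCluster M X ω v).Finite := by
  refine ae_all_iff.2 fun v => ?_
  have hsum : Measurable fun ω => ∑' s : Σ n, (Fin n → ℕ), heavyPathWeight M (X · ω) v s.2 :=
    Measurable.tsum fun s => measurable_heavyPathWeight hmeas M v s.2
  have hint := lintegral_tsum_heavyPathWeight P hmeas hindep hident M v
  filter_upwards [ae_lt_top hsum (hint ▸ (tsum_geometric_lt_top.2 hq).ne)] with ω hω
  refine ((ENNReal.finite_const_le_of_tsum_ne_top hω.ne one_ne_zero).image
    fun s => v ++ List.ofFn s.2).subset fun w hw => ?_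
  obtain ⟨t, rfl⟩ := hw.1
  refine ⟨⟨t.length, t.get⟩, (heavyPathWeight_eq_one ?_).ge, by simp⟩
  simpa using hw

end Probability

theorem stmt14_general {Ω : Type*} [MeasurableSpace Ω] (P : MeasureTheory.Measure Ω)
    (X : List ℕ → Ω → ℕ) (hmeas : ∀ w, Measurable (X w))
    (hindep : ProbabilityTheory.iIndepFun X P)
    (hident : ∀ w, ProbabilityTheory.IdentDistrib (X w) (X []) P P)
    (hexp : (∫⁻ ω, (X [] ω : ℝ≥0∞) ∂P) < ⊤)
 :
    ∀ᵐ ω ∂P, ∃ M : ℕ, 1 ≤ M ∧ ∃ Vi : ℕ → Set (List ℕ),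
      (∀ i, Vi i ⊆ randomTreeVertices X ω) ∧
      (∀ i j, i ≠ j → Disjoint (Vi i) (Vi j)) ∧
      (⋃ i, Vi i) = randomTreeVertices X ω ∧
      (∀ i, (Vi i).Finite) ∧
      (∀ i, ((randomTreeGraph X ω).induce (Vi i)).Preconnected) ∧
      (∀ i, ∀ x ∈ Vi i,
        (∀ a : ℕ, x ++ [a] ∈ randomTreeVertices X ω → x ++ [a] ∉ Vi i) →
        randomTreeOff X ω x ≤ M) := by
  obtain ⟨M, hM, hq⟩ := exists_tail_lintegral_lt_one (hmeas []) hexp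
  filter_upwards [ae_finite_heavyCluster P hmeas hindep hident hq] with ω hfin
  exact ⟨M, hM, exists_finite_subtree_partition hfin⟩

/-- (Decomposition of a random tree with i.i.d. offspring of finite
expectation into finite subtrees.) -/
theorem stmt14 {Ω : Type*} [MeasurableSpace Ω] (P : MeasureTheory.Measure Ω)
    [MeasureTheory.IsProbabilityMeasure P]
    (X : List ℕ → Ω → ℕ) (hmeas : ∀ w, Measurable (X w))
    (hindep : ProbabilityTheory.iIndepFun X P)
    (hident : ∀ w, ProbabilityTheory.IdentDistrib (X w) (X []) P P)
    (hexp : (∫⁻ ω, (X [] ω : ℝ≥0∞) ∂P) < ⊤)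
 :
    ∀ᵐ ω ∂P, ∃ M : ℕ, 1 ≤ M ∧ ∃ Vi : ℕ → Set (List ℕ),
      (∀ i, Vi i ⊆ randomTreeVertices X ω) ∧
      (∀ i j, i ≠ j → Disjoint (Vi i) (Vi j)) ∧
      (⋃ i, Vi i) = randomTreeVertices X ω ∧
      (∀ i, (Vi i).Finite) ∧
      (∀ i, ((randomTreeGraph X ω).induce (Vi i)).Preconnected) ∧
      (∀ i, ∀ x ∈ Vi i,
        (∀ a : ℕ, x ++ [a] ∈ randomTreeVertices X ω → x ++ [a] ∉ Vi i) →
        randomTreeOff X ω x ≤ M) :=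
  stmt14_general P X hmeas hindep hident hexp
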